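/- For a finite multicomplex M, the spectrum (multiset of eigenvalues, ignoring zeros) of the degree-i Laplacian splits as a multiset sum over square parts: s'_i(M) = Σ_{p²∈M, 2deg(p)≤i} s'_{i−2deg(p)}(M^{(p²)}), and similarly for s''_i and s^{tot}_i. -/

import Mathlib

open Finsupp

/-- A monomial in variables `x_1 < ⋯ < x_n`, given by its exponent vector. -/
abbrev Mon (n : ℕ) := Fin n → ℕ

/-- Total degree of a monomial. -/
def tdeg {n : ℕ} (m : Mon n) : ℕ := ∑ i, m i

/-- Divisibility of monomials. -/
def mdvd {n : ℕ} (m t : Mon n) : Prop := ∀ i, m i ≤ t i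

/-- A multicomplex: a finite set of monomials closed under taking divisors. -/
def IsMulticomplex {n : ℕ} (M : Finset (Mon n)) : Prop :=
  ∀ m t : Mon n, mdvd m t → t ∈ M → m ∈ M

/-- Square-free monomials. -/
def SqFree {n : ℕ} (m : Mon n) : Prop := ∀ i, m i ≤ 1

def decr {n : ℕ} (m : Mon n) (j : Fin n) : Mon n := Function.update m j (m j - 1)
def incr {n : ℕ} (m : Mon n) (j : Fin n) : Mon n := Function.update m j (m j + 1)
def unitMon {n : ℕ} (i : Fin n) : Mon n := fun j => if j = i then 1 else 0
/-- Sum of the exponents of the variables preceding `j`. -/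
def presum {n : ℕ} (m : Mon n) (j : Fin n) : ℕ := ∑ i ∈ Finset.univ.filter (· < j), m i
/-- Multiplication by the square `p²`. -/
def mulSq {n : ℕ} (p m : Mon n) : Mon n := fun i => 2 * p i + m i

/-- The Björner–Vrećica boundary operator on `ℤ[X]`. -/
noncomputable def bdry (n : ℕ) : (Mon n →₀ ℤ) →ₗ[ℤ] (Mon n →₀ ℤ) :=
  Finsupp.lsum ℤ fun m => LinearMap.toSpanSingleton ℤ _
    (∑ j, (((-1 : ℤ) ^ presum m j) * ((m j % 2 : ℕ) : ℤ)) • Finsupp.single (decr m j) (1 : ℤ))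

/-- The Björner–Vrećica boundary operator, with real coefficients. -/
noncomputable def bdryR (n : ℕ) : (Mon n →₀ ℝ) →ₗ[ℝ] (Mon n →₀ ℝ) :=
  Finsupp.lsum ℝ fun m => LinearMap.toSpanSingleton ℝ _
    (∑ j, (((-1 : ℝ) ^ presum m j) * ((m j % 2 : ℕ) : ℝ)) • Finsupp.single (decr m j) (1 : ℝ))

/-- The dual boundary operator `∂*` of the multicomplex `M`. -/
noncomputable def upL {n : ℕ} (M : Finset (Mon n)) : (Mon n →₀ ℝ) →ₗ[ℝ] (Mon n →₀ ℝ) :=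
  Finsupp.lsum ℝ fun m => LinearMap.toSpanSingleton ℝ _
    (∑ j, (if m j % 2 = 0 ∧ incr m j ∈ M then ((-1 : ℝ) ^ presum m j) else 0) •
      Finsupp.single (incr m j) (1 : ℝ))

/-- Inner product making the monomials an orthonormal basis. -/
noncomputable def dot {n : ℕ} (f g : Mon n →₀ ℝ) : ℝ := ∑ m ∈ f.support, f m * g m

/-- Degree-`d` part of `M`. -/
def Mdeg {n : ℕ} (M : Finset (Mon n)) (d : ℕ) : Finset (Mon n) :=
  M.filter fun m => tdeg m = d

/-- `ℝM_d`, the span of the degree-`d` monomials of `M`. -/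
noncomputable def Vdeg {n : ℕ} (M : Finset (Mon n)) (d : ℕ) : Submodule ℝ (Mon n →₀ ℝ) :=
  Submodule.span ℝ ((fun m => Finsupp.single m (1 : ℝ)) '' ↑(Mdeg M d))

/-- The simplicial complex `M^{(p²)} = {q squarefree : p²q ∈ M}`. -/
def Mp2 {n : ℕ} (M : Finset (Mon n)) (p : Mon n) : Finset (Mon n) :=
  M.filter fun q => (∀ i, q i ≤ 1) ∧ mulSq p q ∈ M

/-- The set of monomials `p` with `p² ∈ M`. -/
def sqrts {n : ℕ} (M : Finset (Mon n)) : Finset (Mon n) :=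
  (M.filter fun m => ∀ i, m i % 2 = 0).image fun m i => m i / 2

/-- Laplacian `L' = ∂∂*` of the multicomplex `M`. -/
noncomputable def lapUp {n : ℕ} (M : Finset (Mon n)) : (Mon n →₀ ℝ) →ₗ[ℝ] (Mon n →₀ ℝ) :=
  bdryR n ∘ₗ upL M

/-- Laplacian `L'' = ∂*∂` of the multicomplex `M`. -/
noncomputable def lapDown {n : ℕ} (M : Finset (Mon n)) : (Mon n →₀ ℝ) →ₗ[ℝ] (Mon n →₀ ℝ) :=
  upL M ∘ₗ bdryR n

/-- Multiplicity of `μ` as an eigenvalue of an operator `T` on `ℝM_d`. -/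
noncomputable def multOf {n : ℕ} (M : Finset (Mon n)) (d : ℕ)
    (T : (Mon n →₀ ℝ) →ₗ[ℝ] (Mon n →₀ ℝ)) (μ : ℝ) : ℕ :=
  Module.finrank ℝ ↥(LinearMap.ker (T - μ • LinearMap.id) ⊓ Vdeg M d)

/-- Multiplicity of `μ` in the spectrum `s'_d` of `L'_d`. -/
noncomputable def multL' {n : ℕ} (M : Finset (Mon n)) (d : ℕ) (μ : ℝ) : ℕ :=
  multOf M d (lapUp M) μ

/-- Multiplicity of `μ` in the spectrum `s''_d` of `L''_d`. -/
noncomputable def multL'' {n : ℕ} (M : Finset (Mon n)) (d : ℕ) (μ : ℝ) : ℕ :=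
  multOf M d (lapDown M) μ

/-- Multiplicity of `μ` in the spectrum `s^{tot}_d` of `L_d = L'_d + L''_d`. -/
noncomputable def multL {n : ℕ} (M : Finset (Mon n)) (d : ℕ) (μ : ℝ) : ℕ :=
  multOf M d (lapUp M + lapDown M) μ

/-- Shifted multicomplex (relative to its support). -/
def Shifted {n : ℕ} (N : Finset (Mon n)) : Prop :=
  ∀ (m : Mon n) (i j : Fin n), i < j → incr m j ∈ N → unitMon i ∈ N → incr m i ∈ N

/-- Shifted simplicial complex (relative to its support). -/
def ShiftedSimp {n : ℕ} (N : Finset (Mon n)) : Prop :=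
  ∀ (m : Mon n) (i j : Fin n), i < j → incr m j ∈ N → unitMon i ∈ N → m i = 0 →
    incr m i ∈ N

/-- `d_j`: the number of monomials of degree `k` in `N` divisible by `x_j`. -/
def dseq {n : ℕ} (N : Finset (Mon n)) (k : ℕ) (j : Fin n) : ℕ :=
  ((Mdeg N k).filter fun m => 1 ≤ m j).card

/-- The `j`-th entry of the conjugate partition `d_k^T(N)`. -/
def dconj {n : ℕ} (N : Finset (Mon n)) (k : ℕ) (j : ℕ) : ℕ :=
  (Finset.univ.filter fun i : Fin n => j ≤ dseq N k i).card

/-!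
Every monomial factors uniquely as `m = p² q` with `q` square-free, so `ℝ[x]` is the direct sum
of the blocks `p² · ℝ[square-free]`, indexed by the fibres of `m ↦ p`. Multiplication by `p²`
commutes with `∂`, whose coefficients only see parities of exponents, and carries `∂*` of
`M^{(p²)}` to `∂*` of `M` on square-free inputs. Hence the Laplacians of `M` are block diagonal,
the `p²`-block being conjugate to the Laplacian of `M^{(p²)}` shifted in degree by `2 deg p`, and
each eigenspace of `L_i(M)` is the direct sum of the eigenspaces of the blocks.
-/

namespace Finsupp

variable {α β M R K : Type*}

theorem eqOn_supported_of_single [CommSemiring R] {A B : (α →₀ R) →ₗ[R] (α →₀ R)} {s : Set α}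
    (h : ∀ a ∈ s, A (single a 1) = B (single a 1)) : Set.EqOn A B (supported R R s) := by
  rw [supported_eq_span_single]
  exact LinearMap.eqOn_span' (by rintro _ ⟨a, ha, rfl⟩; exact h a ha)

theorem apply_filter_fiber_of_mem_invtSubmodule [CommSemiring R] [DecidableEq β] {f : α → β}
    {T : Module.End R (α →₀ R)}
    (hT : ∀ b, supported R R (f ⁻¹' {b}) ∈ Module.End.invtSubmodule T) (b : β) (v : α →₀ R) :
    T (v.filter (f · = b)) = (T v).filter (f · = b) := by
  induction v using Finsupp.induction_linear with
  | zero => simp only [filter_zero, map_zero]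
  | add v w hv hw => simp only [filter_add, map_add, hv, hw]
  | single a c =>
    have hTa : ↑(T (single a c)).support ⊆ f ⁻¹' {f a} :=
      (mem_supported R _).1 <| (Module.End.mem_invtSubmodule_iff_forall_mem_of_mem T).1 (hT (f a))
        _ (single_mem_supported R c rfl)
    by_cases ha : f a = b
    · rw [filter_single_of_pos (f · = b) ha, eq_comm, filter_eq_self_iff]
      intro x hx
      rw [hTa (mem_support_iff.2 hx), ha]
    · rw [filter_single_of_neg (f · = b) ha, map_zero, eq_comm, filter_eq_zero_iff]
      intro x hx
      by_contra h
      exact ha ((hTa (mem_support_iff.2 h) : f x = f a).symm.trans hx)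

theorem sum_filter_fiber [AddCommMonoid M] [DecidableEq β] {f : α → β} {S : Finset β}
    {v : α →₀ M} (hS : ∀ a ∈ v.support, f a ∈ S) :
    ∑ b ∈ S, v.filter (f · = b) = v := by
  ext a
  simp only [coe_finsetSum, Finset.sum_apply, filter_apply, Finset.sum_ite_eq]
  split_ifs with ha
  · rfl
  · exact (notMem_support_iff.1 fun h => ha (hS a h)).symm

theorem filter_fiber_sum [AddCommMonoid M] [DecidableEq β] {ι : Type*} [Fintype ι]
    {f : α → β} {g : ι → β} (hg : Function.Injective g) {w : ι → α →₀ M}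
    (hw : ∀ j, ∀ a ∈ (w j).support, f a = g j) (i : ι) :
    (∑ j, w j).filter (f · = g i) = w i := by
  ext a
  simp only [filter_apply, coe_finsetSum, Finset.sum_apply]
  split_ifs with ha
  · refine Finset.sum_eq_single i (fun j _ hji => ?_) (by simp)
    by_contra h
    exact hji (hg ((hw j a (mem_support_iff.2 h)).symm.trans ha))
  · by_contra h
    exact ha (hw i a (mem_support_iff.2 (Ne.symm h)))

theorem finrank_eq_sum_finrank_inf_supported_fiber [Field K] [DecidableEq β] (f : α → β)
    (S : Finset β) (E : Submodule K (α →₀ K)) [FiniteDimensional K E]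
    (hfilter : ∀ b, ∀ v ∈ E, v.filter (f · = b) ∈ E)
    (hS : ∀ v ∈ E, ∀ a ∈ v.support, f a ∈ S) :
    Module.finrank K E = ∑ b ∈ S, Module.finrank K ↥(E ⊓ supported K K (f ⁻¹' {b})) := by
  let e : E ≃ₗ[K] ∀ b : S, ↥(E ⊓ supported K K (f ⁻¹' {b.1})) :=
    { toFun := fun v b => ⟨v.1.filter (f · = b), hfilter b v v.2,
        (mem_supported K _).2 fun a ha => by
          simp only [support_filter, Finset.coe_filter] at ha; exact ha.2⟩
      map_add' := fun v w => by ext; simp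
      map_smul' := fun c v => by ext; simp [filter_smul]
      invFun := fun w => ⟨∑ b, (w b : α →₀ K), Submodule.sum_mem _ fun b _ => (w b).2.1⟩
      left_inv := fun v => Subtype.ext <| by
        simpa only [Finset.sum_coe_sort S (fun b => v.1.filter (f · = b))]
          using sum_filter_fiber (hS v v.2)
      right_inv := fun w => funext fun b => Subtype.ext <|
        filter_fiber_sum Subtype.val_injective
          (fun c a ha => (mem_supported K _).1 (w c).2.2 ha) b }
  have (b : S) : Module.Free K ↥(E ⊓ supported K K (f ⁻¹' {b.1})) :=
    Module.Free.of_divisionRing K ↥(E ⊓ supported K K (f ⁻¹' {b.1}))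
  rw [e.finrank_eq, Module.finrank_pi_fintype, Finset.sum_coe_sort S
    (fun b => Module.finrank K ↥(E ⊓ supported K K (f ⁻¹' {b})))]

theorem finrank_eigenspace_inf_supported_eq_sum [Field K] [DecidableEq β] {f : α → β}
    {T : Module.End K (α →₀ K)}
    (hT : ∀ b, supported K K (f ⁻¹' {b}) ∈ Module.End.invtSubmodule T) (μ : K) (s : Finset α)
    (S : Finset β) (hS : ∀ a ∈ s, f a ∈ S) :
    Module.finrank K ↥(T.eigenspace μ ⊓ supported K K ↑s) =
      ∑ b ∈ S, Module.finrank K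
        ↥(T.eigenspace μ ⊓ supported K K ↑s ⊓ supported K K (f ⁻¹' {b})) := by
  have : Module.Finite K (supported K K (↑s : Set α)) :=
    Module.Finite.equiv (supportedEquivFinsupp (M := K) (R := K) (↑s : Set α)).symm
  have : FiniteDimensional K ↥(T.eigenspace μ ⊓ supported K K ↑s) :=
    Submodule.finiteDimensional_of_le inf_le_right
  refine finrank_eq_sum_finrank_inf_supported_fiber f S _ (fun b v hv => ?_)
    (fun v hv a ha => hS a ((mem_supported K _).1 (Submodule.mem_inf.1 hv).2 ha))
  obtain ⟨hker, hsupp⟩ := Submodule.mem_inf.1 hv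
  refine Submodule.mem_inf.2 ⟨?_, ?_⟩
  · rw [Module.End.mem_eigenspace_iff] at hker ⊢
    rw [apply_filter_fiber_of_mem_invtSubmodule hT, hker, filter_smul]
  · exact (mem_supported K _).2 <|
      (Finset.coe_subset.2 (Finset.filter_subset _ v.support)).trans ((mem_supported K _).1 hsupp)

end Finsupp

section Multicomplex

variable {n : ℕ}

def sqrtPart (m : Mon n) : Mon n := fun i => m i / 2

def sqfreePart (m : Mon n) : Mon n := fun i => m i % 2

theorem mulSq_sqrtPart_sqfreePart (m : Mon n) : mulSq (sqrtPart m) (sqfreePart m) = m := by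
  funext i; simp only [mulSq, sqrtPart, sqfreePart]; omega

theorem sqFree_sqfreePart (m : Mon n) : SqFree (sqfreePart m) := fun i => by
  simp only [sqfreePart]; omega

theorem sqrtPart_mulSq (p : Mon n) {q : Mon n} (hq : SqFree q) : sqrtPart (mulSq p q) = p := by
  funext i; have := hq i; simp only [sqrtPart, mulSq]; omega

theorem mulSq_injective (p : Mon n) : Function.Injective (mulSq p) := fun a b h => by
  funext i; have := congrFun h i; simp only [mulSq] at this; omega

theorem mulSq_mod_two (p q : Mon n) (j : Fin n) : mulSq p q j % 2 = q j % 2 := by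
  simp only [mulSq]; omega

theorem tdeg_mulSq (p q : Mon n) : tdeg (mulSq p q) = 2 * tdeg p + tdeg q := by
  simp only [tdeg, mulSq, Finset.sum_add_distrib, Finset.mul_sum]

theorem mdvd_mulSq (p q : Mon n) : mdvd q (mulSq p q) := fun i => by simp [mulSq]

theorem incr_mulSq (p q : Mon n) (j : Fin n) : incr (mulSq p q) j = mulSq p (incr q j) := by
  funext i
  by_cases h : i = j
  · subst h; simp only [incr, mulSq, Function.update_self]; omega
  · simp [incr, mulSq, Function.update_of_ne h]

theorem decr_mulSq (p : Mon n) {q : Mon n} {j : Fin n} (h : 1 ≤ q j) :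
    decr (mulSq p q) j = mulSq p (decr q j) := by
  funext i
  by_cases hij : i = j
  · subst hij; simp only [decr, mulSq, Function.update_self]; omega
  · simp [decr, mulSq, Function.update_of_ne hij]

theorem neg_one_pow_presum_mulSq (p q : Mon n) (j : Fin n) :
    (-1 : ℝ) ^ presum (mulSq p q) j = (-1 : ℝ) ^ presum q j := by
  simp only [presum, mulSq, Finset.sum_add_distrib, ← Finset.mul_sum, pow_add, pow_mul,
    neg_one_sq, one_pow, one_mul]

theorem SqFree.decr {m : Mon n} (hm : SqFree m) (j : Fin n) : SqFree (decr m j) := fun i => by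
  by_cases h : i = j
  · subst h; simp only [_root_.decr, Function.update_self]; have := hm i; omega
  · simp only [_root_.decr, Function.update_of_ne h]; exact hm i

theorem image_mulSq_setOf_sqFree (p : Mon n) :
    mulSq p '' {q | SqFree q} = sqrtPart ⁻¹' {p} := by
  ext m
  constructor
  · rintro ⟨q, hq, rfl⟩
    exact sqrtPart_mulSq p hq
  · intro (hm : sqrtPart m = p)
    exact ⟨sqfreePart m, sqFree_sqfreePart m, hm ▸ mulSq_sqrtPart_sqfreePart m⟩

theorem mem_Mp2 {M : Finset (Mon n)} (hM : IsMulticomplex M) {p q : Mon n} :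
    q ∈ Mp2 M p ↔ SqFree q ∧ mulSq p q ∈ M := by
  refine ⟨fun h => (Finset.mem_filter.1 h).2, fun ⟨hq, hpq⟩ => ?_⟩
  exact Finset.mem_filter.2 ⟨hM _ _ (mdvd_mulSq p q) hpq, hq, hpq⟩

theorem sqrtPart_mem_sqrts {M : Finset (Mon n)} (hM : IsMulticomplex M) {m : Mon n}
    (hm : m ∈ M) : sqrtPart m ∈ sqrts M := by
  refine Finset.mem_image.2 ⟨fun i => 2 * (m i / 2), Finset.mem_filter.2
    ⟨hM _ m (fun i => by omega) hm, fun i => by simp only; omega⟩, ?_⟩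
  funext i; simp only [sqrtPart]; omega

theorem mulSq_mem_Mdeg_iff {M : Finset (Mon n)} (hM : IsMulticomplex M) {p q : Mon n}
    (hq : SqFree q) {i : ℕ} (hi : 2 * tdeg p ≤ i) :
    mulSq p q ∈ Mdeg M i ↔ q ∈ Mdeg (Mp2 M p) (i - 2 * tdeg p) := by
  simp only [Mdeg, Finset.mem_filter, mem_Mp2 hM, tdeg_mulSq, hq, true_and]
  exact and_congr_right fun _ => ⟨fun h => by omega, fun h => by omega⟩

theorem Vdeg_eq_supported (N : Finset (Mon n)) (d : ℕ) :
    Vdeg N d = supported ℝ ℝ ↑(Mdeg N d) := by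
  rw [Vdeg, supported_eq_span_single]

theorem multOf_eq_finrank_eigenspace (N : Finset (Mon n)) (d : ℕ)
    (T : Module.End ℝ (Mon n →₀ ℝ)) (μ : ℝ) :
    multOf N d T μ = Module.finrank ℝ ↥(T.eigenspace μ ⊓ Vdeg N d) := by
  rw [multOf, Module.End.eigenspace_def]; rfl

abbrev sqFreeSupported (n : ℕ) : Submodule ℝ (Mon n →₀ ℝ) := supported ℝ ℝ {q : Mon n | SqFree q}

noncomputable def mulSqMap (p : Mon n) : Module.End ℝ (Mon n →₀ ℝ) := lmapDomain ℝ ℝ (mulSq p)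

theorem mulSqMap_single (p q : Mon n) (c : ℝ) : mulSqMap p (single q c) = single (mulSq p q) c :=
  mapDomain_single

theorem mulSqMap_injective (p : Mon n) : Function.Injective (mulSqMap p) :=
  mapDomain_injective (mulSq_injective p)

theorem map_mulSqMap_sqFreeSupported (p : Mon n) :
    (sqFreeSupported n).map (mulSqMap p) = supported ℝ ℝ (sqrtPart ⁻¹' {p}) := by
  rw [mulSqMap, lmapDomain_supported, image_mulSq_setOf_sqFree]

theorem bdryR_single (m : Mon n) :
    bdryR n (single m 1) =
      ∑ j, ((-1 : ℝ) ^ presum m j * ((m j % 2 : ℕ) : ℝ)) • single (decr m j) (1 : ℝ) := by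
  rw [bdryR, lsum_single, LinearMap.toSpanSingleton_apply_one]

theorem upL_single (M : Finset (Mon n)) (m : Mon n) :
    upL M (single m 1) =
      ∑ j, (if m j % 2 = 0 ∧ incr m j ∈ M then (-1 : ℝ) ^ presum m j else 0) •
        single (incr m j) (1 : ℝ) := by
  rw [upL, lsum_single, LinearMap.toSpanSingleton_apply_one]

theorem bdryR_mulSq_single (p q : Mon n) :
    bdryR n (single (mulSq p q) 1) = mulSqMap p (bdryR n (single q 1)) := by
  rw [bdryR_single, bdryR_single, map_sum]
  refine Finset.sum_congr rfl fun j _ => ?_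
  rw [map_smul, mulSqMap_single, mulSq_mod_two, neg_one_pow_presum_mulSq]
  rcases Nat.eq_zero_or_pos (q j) with h | h
  · simp [h]
  · rw [decr_mulSq p h]

-- For even `q j`, `incr q j` is square-free, so `incr q j ∈ Mp2 M p` iff `p² · incr q j ∈ M`.
theorem upL_mulSq_single {M : Finset (Mon n)} (hM : IsMulticomplex M) (p : Mon n) {q : Mon n}
    (hq : SqFree q) :
    upL M (single (mulSq p q) 1) = mulSqMap p (upL (Mp2 M p) (single q 1)) := by
  rw [upL_single, upL_single, map_sum]
  refine Finset.sum_congr rfl fun j _ => ?_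
  rw [map_smul, mulSqMap_single, incr_mulSq, neg_one_pow_presum_mulSq, mulSq_mod_two]
  congr 1
  by_cases h0 : q j % 2 = 0
  · have hincr : SqFree (incr q j) := fun i => by
      by_cases hij : i = j
      · subst hij; simp only [incr, Function.update_self]; have := hq i; omega
      · simp only [incr, Function.update_of_ne hij]; exact hq i
    simp only [h0, true_and, mem_Mp2 hM, hincr]
  · simp [h0]

theorem upL_mem_supported (N : Finset (Mon n)) (v : Mon n →₀ ℝ) :
    upL N v ∈ supported ℝ ℝ ↑N := by
  induction v using Finsupp.induction_linear with
  | zero => simp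
  | add v w hv hw => rw [map_add]; exact add_mem hv hw
  | single q c =>
    rw [← smul_single_one, map_smul, upL_single]
    refine Submodule.smul_mem _ _ (Submodule.sum_mem _ fun j _ => ?_)
    split_ifs with h
    · exact Submodule.smul_mem _ _ (single_mem_supported ℝ _ h.2)
    · rw [zero_smul]; exact zero_mem _

theorem bdryR_mem_sqFreeSupported {v : Mon n →₀ ℝ} (hv : v ∈ sqFreeSupported n) :
    bdryR n v ∈ sqFreeSupported n := by
  refine (Module.End.mem_invtSubmodule_iff_forall_mem_of_mem _).1 ?_ v hv
  rw [sqFreeSupported, supported_eq_span_single, Module.End.mem_invtSubmodule_iff_map_le,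
    Submodule.map_span_le]
  rintro _ ⟨q, hq, rfl⟩
  rw [← supported_eq_span_single, bdryR_single]
  exact Submodule.sum_mem _ fun j _ =>
    Submodule.smul_mem _ _ (single_mem_supported ℝ _ (SqFree.decr hq j))

theorem bdryR_mulSqMap (p : Mon n) (v : Mon n →₀ ℝ) :
    bdryR n (mulSqMap p v) = mulSqMap p (bdryR n v) := by
  induction v using Finsupp.induction_linear with
  | zero => simp
  | add v w hv hw => simp only [map_add, hv, hw]
  | single q c => rw [← smul_single_one, map_smul, map_smul, mulSqMap_single, bdryR_mulSq_single,
      map_smul, map_smul]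

theorem upL_mulSqMap {M : Finset (Mon n)} (hM : IsMulticomplex M) (p : Mon n) {u : Mon n →₀ ℝ}
    (hu : u ∈ sqFreeSupported n) : upL M (mulSqMap p u) = mulSqMap p (upL (Mp2 M p) u) :=
  eqOn_supported_of_single (A := upL M ∘ₗ mulSqMap p) (B := mulSqMap p ∘ₗ upL (Mp2 M p))
    (fun q hq => by simpa [mulSqMap_single] using upL_mulSq_single hM p hq) hu

theorem supported_Mp2_le_sqFreeSupported (M : Finset (Mon n)) (p : Mon n) :
    supported ℝ ℝ ↑(Mp2 M p) ≤ sqFreeSupported n :=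
  supported_mono fun _ hq => (Finset.mem_filter.1 hq).2.1

theorem lapUp_mulSqMap {M : Finset (Mon n)} (hM : IsMulticomplex M) (p : Mon n)
    {u : Mon n →₀ ℝ} (hu : u ∈ sqFreeSupported n) :
    lapUp M (mulSqMap p u) = mulSqMap p (lapUp (Mp2 M p) u) := by
  simp only [lapUp, LinearMap.comp_apply, upL_mulSqMap hM p hu, bdryR_mulSqMap]

theorem lapDown_mulSqMap {M : Finset (Mon n)} (hM : IsMulticomplex M) (p : Mon n)
    {u : Mon n →₀ ℝ} (hu : u ∈ sqFreeSupported n) :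
    lapDown M (mulSqMap p u) = mulSqMap p (lapDown (Mp2 M p) u) := by
  simp only [lapDown, LinearMap.comp_apply, bdryR_mulSqMap,
    upL_mulSqMap hM p (bdryR_mem_sqFreeSupported hu)]

theorem sqFreeSupported_mem_invtSubmodule_lapUp (M : Finset (Mon n)) (p : Mon n) :
    sqFreeSupported n ∈ Module.End.invtSubmodule (lapUp (Mp2 M p)) :=
  (Module.End.mem_invtSubmodule_iff_forall_mem_of_mem _).2 fun v _ =>
    bdryR_mem_sqFreeSupported (supported_Mp2_le_sqFreeSupported M p (upL_mem_supported _ v))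

theorem sqFreeSupported_mem_invtSubmodule_lapDown (M : Finset (Mon n)) (p : Mon n) :
    sqFreeSupported n ∈ Module.End.invtSubmodule (lapDown (Mp2 M p)) :=
  (Module.End.mem_invtSubmodule_iff_forall_mem_of_mem _).2 fun _ _ =>
    supported_Mp2_le_sqFreeSupported M p (upL_mem_supported _ _)

section Intertwining

variable {A B : Module.End ℝ (Mon n →₀ ℝ)} {p : Mon n}

theorem supported_sqrtPart_preimage_mem_invtSubmodule
    (hAB : ∀ u ∈ sqFreeSupported n, A (mulSqMap p u) = mulSqMap p (B u))
    (hB : sqFreeSupported n ∈ Module.End.invtSubmodule B) :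
    supported ℝ ℝ (sqrtPart ⁻¹' {p}) ∈ Module.End.invtSubmodule A := by
  rw [← map_mulSqMap_sqFreeSupported, Module.End.mem_invtSubmodule_iff_forall_mem_of_mem]
  rintro _ ⟨u, hu, rfl⟩
  exact ⟨B u, (Module.End.mem_invtSubmodule_iff_forall_mem_of_mem B).1 hB u hu, (hAB u hu).symm⟩

theorem eigenspace_inf_Vdeg_inf_sqrtPart_preimage_eq_map {M : Finset (Mon n)} (hM : IsMulticomplex M)
    (hAB : ∀ u ∈ sqFreeSupported n, A (mulSqMap p u) = mulSqMap p (B u)) (μ : ℝ) {i : ℕ}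
    (hi : 2 * tdeg p ≤ i) :
    A.eigenspace μ ⊓ Vdeg M i ⊓ supported ℝ ℝ (sqrtPart ⁻¹' {p}) =
      (B.eigenspace μ ⊓ Vdeg (Mp2 M p) (i - 2 * tdeg p)).map (mulSqMap p) := by
  have hdeg {q : Mon n} (hq : SqFree q) := mulSq_mem_Mdeg_iff hM hq hi
  ext v
  constructor
  · rintro ⟨⟨hv, hvdeg⟩, hvfib⟩
    rw [← map_mulSqMap_sqFreeSupported] at hvfib
    obtain ⟨u, hu, rfl⟩ := hvfib
    refine ⟨u, ⟨?_, ?_⟩, rfl⟩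
    · rw [SetLike.mem_coe, Module.End.mem_eigenspace_iff] at hv ⊢
      apply mulSqMap_injective p
      rw [← hAB u hu, hv, map_smul]
    · rw [SetLike.mem_coe, Vdeg_eq_supported, mem_supported] at hvdeg ⊢
      intro q hq
      refine (hdeg ((mem_supported ℝ u).1 hu hq)).1 (hvdeg ?_)
      rw [Finset.mem_coe, mem_support_iff, mulSqMap, lmapDomain_apply,
        mapDomain_apply (mulSq_injective p)]
      exact mem_support_iff.1 hq
  · rintro ⟨u, ⟨hu, hudeg⟩, rfl⟩
    rw [Vdeg_eq_supported] at hudeg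
    have hsq {q} (hq : q ∈ Mdeg (Mp2 M p) (i - 2 * tdeg p)) : SqFree q :=
      (Finset.mem_filter.1 (Finset.mem_filter.1 hq).1).2.1
    have hu' : u ∈ sqFreeSupported n := supported_mono (fun q hq => hsq hq) hudeg
    refine ⟨⟨?_, ?_⟩, ?_⟩
    · rw [SetLike.mem_coe, Module.End.mem_eigenspace_iff] at hu ⊢
      rw [hAB u hu', hu, map_smul]
    · have hmap := Submodule.mem_map_of_mem (f := mulSqMap p) hudeg
      rw [mulSqMap, lmapDomain_supported] at hmap
      rw [SetLike.mem_coe, Vdeg_eq_supported]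
      exact supported_mono (by rintro _ ⟨q, hq, rfl⟩; exact (hdeg (hsq hq)).2 hq) hmap
    · rw [← map_mulSqMap_sqFreeSupported]; exact ⟨u, hu', rfl⟩

end Intertwining

theorem multOf_eq_sum_sqrts {M : Finset (Mon n)} (hM : IsMulticomplex M)
    (T : Finset (Mon n) → Module.End ℝ (Mon n →₀ ℝ))
    (hT : ∀ p, ∀ u ∈ sqFreeSupported n, T M (mulSqMap p u) = mulSqMap p (T (Mp2 M p) u))
    (hTp : ∀ p, sqFreeSupported n ∈ Module.End.invtSubmodule (T (Mp2 M p))) (i : ℕ) (μ : ℝ) :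
    multOf M i (T M) μ = ∑ p ∈ sqrts M,
      if 2 * tdeg p ≤ i then multOf (Mp2 M p) (i - 2 * tdeg p) (T (Mp2 M p)) μ else 0 := by
  have hS : ∀ m ∈ Mdeg M i, sqrtPart m ∈ (sqrts M).filter (2 * tdeg · ≤ i) := by
    intro m hm
    obtain ⟨hmM, hdeg⟩ := Finset.mem_filter.1 hm
    rw [← mulSq_sqrtPart_sqfreePart m, tdeg_mulSq] at hdeg
    exact Finset.mem_filter.2 ⟨sqrtPart_mem_sqrts hM hmM, by omega⟩
  rw [← Finset.sum_filter, multOf_eq_finrank_eigenspace, Vdeg_eq_supported,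
    finrank_eigenspace_inf_supported_eq_sum
      (fun p => supported_sqrtPart_preimage_mem_invtSubmodule (hT p) (hTp p)) μ _ _ hS]
  refine Finset.sum_congr rfl fun p hp => ?_
  rw [← Vdeg_eq_supported,
    eigenspace_inf_Vdeg_inf_sqrtPart_preimage_eq_map hM (hT p) μ (Finset.mem_filter.1 hp).2,
    multOf_eq_finrank_eigenspace]
  exact (Submodule.equivMapOfInjective _ (mulSqMap_injective p) _).finrank_eq.symm

end Multicomplex

theorem spectrum_splits_general {n : ℕ} (M : Finset (Mon n)) (hM : IsMulticomplex M)
    (i : ℕ) (μ : ℝ) :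
    multL' M i μ = (∑ p ∈ sqrts M,
        if 2 * tdeg p ≤ i then multL' (Mp2 M p) (i - 2 * tdeg p) μ else 0) ∧
    multL'' M i μ = (∑ p ∈ sqrts M,
        if 2 * tdeg p ≤ i then multL'' (Mp2 M p) (i - 2 * tdeg p) μ else 0) ∧
    multL M i μ = (∑ p ∈ sqrts M,
        if 2 * tdeg p ≤ i then multL (Mp2 M p) (i - 2 * tdeg p) μ else 0) := by
  refine ⟨multOf_eq_sum_sqrts hM lapUp (fun p _ => lapUp_mulSqMap hM p)
      (sqFreeSupported_mem_invtSubmodule_lapUp M) i μ,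
    multOf_eq_sum_sqrts hM lapDown (fun p _ => lapDown_mulSqMap hM p)
      (sqFreeSupported_mem_invtSubmodule_lapDown M) i μ,
    multOf_eq_sum_sqrts hM (fun N => lapUp N + lapDown N) (fun p u hu => ?_) (fun p => ?_) i μ⟩
  · simp only [LinearMap.add_apply, map_add, lapUp_mulSqMap hM p hu, lapDown_mulSqMap hM p hu]
  · exact Module.End.invtSubmodule_inf_invtSubmodule_le_invtSubmodule_add (f := lapUp (Mp2 M p))
      (g := lapDown (Mp2 M p))
      ⟨sqFreeSupported_mem_invtSubmodule_lapUp M p, sqFreeSupported_mem_invtSubmodule_lapDown M p⟩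

/-- the Laplacian spectra of `M` split as multiset sums over
square parts: `s'_i(M) = Σ_{p²∈M, 2 deg p ≤ i} s'_{i−2 deg p}(M^{(p²)})`, and
similarly for `s''` and `s^{tot}` (spectra identified up to zero parts). -/
theorem spectrum_splits {n : ℕ} (M : Finset (Mon n)) (hM : IsMulticomplex M)
    (i : ℕ) (μ : ℝ) (hμ : μ ≠ 0) :
    multL' M i μ = (∑ p ∈ sqrts M,
        if 2 * tdeg p ≤ i then multL' (Mp2 M p) (i - 2 * tdeg p) μ else 0) ∧
    multL'' M i μ = (∑ p ∈ sqrts M,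
        if 2 * tdeg p ≤ i then multL'' (Mp2 M p) (i - 2 * tdeg p) μ else 0) ∧
    multL M i μ = (∑ p ∈ sqrts M,
        if 2 * tdeg p ≤ i then multL (Mp2 M p) (i - 2 * tdeg p) μ else 0) :=
  spectrum_splits_general M hM i μ
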